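/- Let n ≥ 3, k an integer with 1 < k < n/2, and nk/(n-2k) < p < (n+2)k/(n-2k). If u is a regular solution of the initial value problem -(1/k)·C(n-1,k-1)·(r^{n-k}|u'|^{k-1}u')' = r^{n-1}u^p, u > 0, u'(0) = 0, u(0) = ρ > 0, then both integrals ∫_0^∞ r^{n-k}|u'|^{k+1} dr and ∫_0^∞ r^{n-1}u^{p+1} dr are finite and satisfy the energy identity ∫_0^∞ r^{n-k}|u'|^{k+1} dr = (k/C(n-1,k-1))·∫_0^∞ r^{n-1}u^{p+1} dr. -/

import Mathlib

/-!
Integrating the equation from `0` gives the flux `w(r) = -(k/C) ∫₀ʳ t^{n-1} u^p < 0`, so `u` is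
decreasing, and bounding `u(t) ≥ u(r)` inside the integral gives `|u'|^k ≥ k/(nC) · u^p r^k`.
With `α = (p-k)/k` this says `(u^{-α})' ≥ c r`, whence the decay `u ≤ C r^{-2k/(p-k)}` of the
singular solution. Integrating `(u w)' = r^{n-k}|u'|^{k+1} - (k/C) r^{n-1} u^{p+1}` over `[0,R]`,
the decay makes `r^{n-1} u^{p+1}` integrable when `p < (n+2)k/(n-2k)` and the boundary term
`u(R) w(R)` tend to `0` when `p > nk/(n-2k)`; letting `R → ∞` gives both integrability of the
energy density and the identity.
-/

open MeasureTheory Real Set Filter Asymptotics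

noncomputable section

namespace KHessianPaper

/-- The binomial coefficient `C(n-1, k-1)` as a real number. -/
def binomC (n k : ℕ) : ℝ := ((n - 1).choose (k - 1) : ℝ)

/-- The flux `w(r) = r^{n-k} |u'(r)|^{k-1} u'(r)`. -/
def flux (n k : ℕ) (u : ℝ → ℝ) (r : ℝ) : ℝ :=
  r ^ (n - k) * |deriv u r| ^ (k - 1) * deriv u r

/-- `u` is a regular solution of the radial `k`-Hessian initial value problem
`-(1/k) C(n-1,k-1) (r^{n-k} |u'|^{k-1} u')' = r^{n-1} u^p`, `u > 0`, `u'(0) = 0`, `u(0) = ρ`. -/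
structure IsRegularSolution (n k : ℕ) (p ρ : ℝ) (u : ℝ → ℝ) : Prop where
  contDiffOn : ContDiffOn ℝ 1 u (Ici 0)
  deriv_zero : derivWithin u (Ici 0) 0 = 0
  init : u 0 = ρ
  pos : ∀ r : ℝ, 0 ≤ r → 0 < u r
  eqn : ∀ r : ℝ, 0 < r →
    HasDerivAt (flux n k u) (-((k : ℝ) / binomC n k) * r ^ (n - 1) * u r ^ p) r
  radial_smooth : ContDiff ℝ 2 (fun x : EuclideanSpace ℝ (Fin n) => -u ‖x‖)

/-- `φ : [0,∞) → ℝ` is the radial profile of a smooth compactly supported function on `ℝⁿ`. -/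
def MemWStar (n : ℕ) (φ : ℝ → ℝ) : Prop :=
  ∃ Φ : EuclideanSpace ℝ (Fin n) → ℝ,
    ContDiff ℝ (⊤ : ℕ∞) Φ ∧ HasCompactSupport Φ ∧ ∀ x, Φ x = φ ‖x‖

/-- The weak form of the equation tested against `φ`. -/
def WeakEqn (n k : ℕ) (p : ℝ) (u φ : ℝ → ℝ) : Prop :=
  ∫ r in Ioi (0 : ℝ),
      ((1 / (k : ℝ)) * binomC n k * r ^ (n - k) * |deriv u r| ^ (k - 1) * deriv u r
          * deriv φ r
        - r ^ (n - 1) * u r ^ p * φ r) = 0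

/-- The second-variation quadratic form `Q_u(φ)`. -/
def Qform (n k : ℕ) (p : ℝ) (u φ : ℝ → ℝ) : ℝ :=
  binomC n k * ∫ r in Ioi (0 : ℝ), r ^ (n - k) * |deriv u r| ^ (k - 1) * (deriv φ r) ^ 2
    - p * ∫ r in Ioi (0 : ℝ), r ^ (n - 1) * u r ^ (p - 1) * (φ r) ^ 2

/-- `u` is a positive stable solution of the radial `k`-Hessian equation. -/
def IsStableSolution (n k : ℕ) (p : ℝ) (u : ℝ → ℝ) : Prop :=
  (∀ r : ℝ, 0 < r → 0 < u r) ∧ ContDiffOn ℝ 1 u (Ioi 0) ∧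
  (∀ φ, MemWStar n φ → WeakEqn n k p u φ) ∧
  (∀ φ, MemWStar n φ → 0 ≤ Qform n k p u φ)

/-- `u` is a positive stable solution on `(R,∞)` of the radial `k`-Hessian equation. -/
def IsStableSolutionOn (n k : ℕ) (p : ℝ) (R : ℝ) (u : ℝ → ℝ) : Prop :=
  (∀ r : ℝ, 0 < r → 0 < u r) ∧ ContDiffOn ℝ 1 u (Ioi 0) ∧
  (∀ φ, MemWStar n φ → WeakEqn n k p u φ) ∧
  (∀ φ : ℝ → ℝ, ContDiff ℝ (⊤ : ℕ∞) φ → HasCompactSupport φ → tsupport φ ⊆ Ioi R →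
    0 ≤ Qform n k p u φ)

/-- The constant `A` in the singular solution `u_s(r) = A r^{-2k/(p-k)}`. -/
def Aconst (n k : ℕ) (p : ℝ) : ℝ :=
  ((1 / (k : ℝ)) * binomC n k) ^ (1 / (p - k))
    * (2 * (k : ℝ) / (p - (k : ℝ))) ^ ((k : ℝ) / (p - k))
    * ((n : ℝ) - 2 * p * k / (p - k)) ^ (1 / (p - k))

/-- The singular solution `u_s(r) = A r^{-2k/(p-k)}`. -/
def uSing (n k : ℕ) (p : ℝ) (r : ℝ) : ℝ := Aconst n k p * r ^ (-(2 * (k : ℝ) / (p - k)))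

/-- The Joseph–Lundgren exponent (finite form, relevant when `n > 2k+8`). -/
def pJL (n k : ℕ) : ℝ :=
  ((k : ℝ) * ((n : ℝ) ^ 2 - 2 * ((k : ℝ) + 3) * (n : ℝ) + 4 * (k : ℝ))
      + 4 * (k : ℝ) * Real.sqrt (2 * ((k : ℝ) + 1) * (n : ℝ) - 4 * (k : ℝ)))
    / (((n : ℝ) - 2 * (k : ℝ)) * ((n : ℝ) - 2 * (k : ℝ) - 8))

/-- The exponent `p* = k(n+2k)/(n-2k)`. -/
def pStar (n k : ℕ) : ℝ := (k : ℝ) * ((n : ℝ) + 2 * (k : ℝ)) / ((n : ℝ) - 2 * (k : ℝ))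

open Topology

theorem monotoneOn_rpow_neg_sub_mul_sq {u : ℝ → ℝ} {α β : ℝ} (hα : 0 < α)
    (hcont : ContinuousOn u (Ici 0)) (hpos : ∀ r, 0 ≤ r → 0 < u r)
    (hdiff : ∀ r, 0 < r → DifferentiableAt ℝ u r)
    (hineq : ∀ r, 0 < r → deriv u r ≤ -(β * r * u r ^ (1 + α))) :
    MonotoneOn (fun r => u r ^ (-α) - α * β / 2 * r ^ 2) (Ici 0) := by
  have hder : ∀ r, 0 < r → HasDerivAt (fun r => u r ^ (-α) - α * β / 2 * r ^ 2)
      (deriv u r * (-α) * u r ^ (-α - 1) - α * β * r) r := fun r hr => by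
    refine (((hdiff r hr).hasDerivAt.rpow_const (p := -α) (Or.inl (hpos r hr.le).ne')).sub
      ((hasDerivAt_pow 2 r).const_mul (α * β / 2))).congr_deriv ?_
    norm_num
    ring
  refine monotoneOn_of_deriv_nonneg (convex_Ici 0)
    ((hcont.rpow_const fun r hr => Or.inl (hpos r hr).ne').sub (by fun_prop)) ?_ ?_ <;>
    rw [interior_Ici]
  · exact fun r hr => (hder r hr).differentiableAt.differentiableWithinAt
  · intro r hr
    have hcancel : u r ^ (-α - 1) * u r ^ (1 + α) = 1 := by
      rw [← rpow_add (hpos r hr.le), show -α - 1 + (1 + α) = 0 by ring, rpow_zero]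
    have hle := mul_le_mul_of_nonneg_left (hineq r hr)
      (by have := hpos r hr.le; positivity : 0 ≤ α * u r ^ (-α - 1))
    rw [(hder r hr).deriv]
    linear_combination hle - α * β * r * hcancel

theorem le_mul_rpow_of_deriv_le_neg_mul_rpow {u : ℝ → ℝ} {α β : ℝ} (hα : 0 < α)
    (hβ : 0 < β) (hcont : ContinuousOn u (Ici 0)) (hpos : ∀ r, 0 ≤ r → 0 < u r)
    (hdiff : ∀ r, 0 < r → DifferentiableAt ℝ u r)
    (hineq : ∀ r, 0 < r → deriv u r ≤ -(β * r * u r ^ (1 + α))) {r : ℝ} (hr : 0 < r) :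
    u r ≤ (α * β / 2) ^ (-α⁻¹) * r ^ (-(2 / α)) := by
  have hmono :=
    monotoneOn_rpow_neg_sub_mul_sq hα hcont hpos hdiff hineq self_mem_Ici hr.le hr.le
  have hu0 : 0 < u 0 ^ (-α) := rpow_pos_of_pos (hpos 0 le_rfl) _
  have hsq : α * β / 2 * r ^ 2 ≤ u r ^ (-α) := by
    norm_num at hmono
    linarith
  calc u r = (u r ^ (-α)) ^ (-α⁻¹) := by
        rw [← rpow_mul (hpos r hr.le).le, neg_mul_neg, mul_inv_cancel₀ hα.ne', rpow_one]
    _ ≤ (α * β / 2 * r ^ 2) ^ (-α⁻¹) :=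
        rpow_le_rpow_of_nonpos (by positivity) hsq (by simpa using hα.le)
    _ = (α * β / 2) ^ (-α⁻¹) * r ^ (-(2 / α)) := by
        rw [mul_rpow (by positivity) (by positivity), ← rpow_natCast, ← rpow_mul hr.le]
        congr 2
        push_cast
        ring

theorem integrableOn_Ioi_of_isBigO_rpow {f : ℝ → ℝ} {s : ℝ} (hf : ContinuousOn f (Ici 0))
    (hs : s < -1) (hO : f =O[atTop] (· ^ s)) : IntegrableOn f (Ioi 0) := by
  refine (integrableOn_Ici_iff_integrableAtFilter_atTop.mpr
    ⟨?_, hf.locallyIntegrableOn measurableSet_Ici⟩).mono_set Ioi_subset_Ici_self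
  exact hO.integrableAtFilter (AEStronglyMeasurable.stronglyMeasurableAtFilter_of_mem
    (hf.aestronglyMeasurable measurableSet_Ici) (Ici_mem_atTop 0))
    (integrableAtFilter_rpow_atTop_iff.mpr hs)

theorem integrableOn_Ioi_of_tendsto_intervalIntegral_of_nonneg {f : ℝ → ℝ} {a I : ℝ}
    (hfi : ∀ b, IntegrableOn f (Ioc a b)) (hf : ∀ x, a < x → 0 ≤ f x)
    (h : Tendsto (fun b => ∫ x in a..b, f x) atTop (𝓝 I)) : IntegrableOn f (Ioi a) := by
  refine integrableOn_Ioi_of_intervalIntegral_norm_tendsto I a hfi tendsto_id (h.congr' ?_)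
  filter_upwards [eventually_ge_atTop a] with b hb
  refine intervalIntegral.integral_congr_ae (ae_of_all _ fun x hx => ?_)
  rw [uIoc_of_le hb] at hx
  exact (norm_of_nonneg (hf x hx.1)).symm

theorem pow_mul_rpow_le_of_le_mul_rpow (m : ℕ) {r x C θ q : ℝ} (hr : 0 < r) (hx : 0 ≤ x)
    (hC : 0 ≤ C) (hq : 0 ≤ q) (hxC : x ≤ C * r ^ (-θ)) :
    r ^ m * x ^ q ≤ C ^ q * r ^ (m - θ * q) := by
  calc r ^ m * x ^ q ≤ r ^ m * (C * r ^ (-θ)) ^ q := by gcongr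
    _ = C ^ q * r ^ (m - θ * q) := by
        rw [mul_rpow hC (rpow_nonneg hr.le _), ← rpow_mul hr.le, sub_eq_add_neg,
          rpow_add hr, rpow_natCast, neg_mul]
        ring

theorem integral_pow_mul_rpow_le_of_le_mul_rpow {u : ℝ → ℝ} (m : ℕ) {C θ q R : ℝ}
    (hnonneg : ∀ r, 0 < r → 0 ≤ u r) (hC : 0 ≤ C)
    (hdecay : ∀ r, 0 < r → u r ≤ C * r ^ (-θ)) (hq : 0 ≤ q) (hθ : θ * q < m + 1) (hR : 0 ≤ R)
    (hint : IntervalIntegrable (fun t => t ^ m * u t ^ q) volume 0 R) :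
    ∫ t in (0:ℝ)..R, t ^ m * u t ^ q ≤ C ^ q * (R ^ (m + 1 - θ * q) / (m + 1 - θ * q)) := by
  have hγ : -1 < (m : ℝ) - θ * q := by linarith
  calc ∫ t in (0:ℝ)..R, t ^ m * u t ^ q
        ≤ ∫ t in (0:ℝ)..R, C ^ q * t ^ ((m : ℝ) - θ * q) :=
        intervalIntegral.integral_mono_on_of_le_Ioo hR hint
          ((intervalIntegral.intervalIntegrable_rpow' hγ).const_mul _) fun t ht =>
          pow_mul_rpow_le_of_le_mul_rpow m ht.1 (hnonneg t ht.1) hC hq (hdecay t ht.1)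
    _ = C ^ q * (R ^ (m + 1 - θ * q) / (m + 1 - θ * q)) := by
        rw [intervalIntegral.integral_const_mul, integral_rpow (Or.inl hγ),
          zero_rpow (by linarith)]
        ring_nf

/-- `uSing n k p` is a multiple of `r ^ (-decayExp k p)`. -/
def decayExp (k p : ℝ) : ℝ := 2 * k / (p - k)

section Exponents

variable {n k p : ℝ}

theorem lt_of_mul_div_sub_two_mul_lt (hk : 0 < k) (hkn : 2 * k < n)
    (hp : n * k / (n - 2 * k) < p) : k < p :=
  lt_trans ((lt_div_iff₀ (by linarith)).mpr (by nlinarith)) hp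

theorem decayExp_mul_lt (hk : 0 < k) (hkn : 2 * k < n) (hp : n * k / (n - 2 * k) < p) :
    decayExp k p * p < n := by
  have hpk := lt_of_mul_div_sub_two_mul_lt hk hkn hp
  rw [div_lt_iff₀ (by linarith)] at hp
  rw [decayExp, div_mul_eq_mul_div, div_lt_iff₀ (by linarith)]
  linarith

theorem lt_decayExp_mul_add_one (hkn : 2 * k < n) (hpk : k < p)
    (hp : p < (n + 2) * k / (n - 2 * k)) : n < decayExp k p * (p + 1) := by
  rw [lt_div_iff₀ (by linarith)] at hp
  rw [decayExp, div_mul_eq_mul_div, lt_div_iff₀ (by linarith)]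
  linarith

end Exponents

theorem binomC_pos {n k : ℕ} (hkn : k ≤ n) : 0 < binomC n k := by
  unfold binomC
  exact_mod_cast Nat.choose_pos (by omega)

theorem flux_zero {n k : ℕ} {u : ℝ → ℝ} (hkn : k < n) : flux n k u 0 = 0 := by
  simp [flux, zero_pow (Nat.sub_ne_zero_of_lt hkn)]

theorem deriv_mul_flux {n k : ℕ} (u : ℝ → ℝ) (r : ℝ) (hk : 0 < k) :
    deriv u r * flux n k u r = r ^ (n - k) * |deriv u r| ^ (k + 1) := by
  rw [flux, show k + 1 = k - 1 + 2 by omega, pow_add, sq_abs]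
  ring

namespace IsRegularSolution

variable {n k : ℕ} {p ρ : ℝ} {u : ℝ → ℝ}

theorem hasDerivAt (hu : IsRegularSolution n k p ρ u) {r : ℝ} (hr : 0 < r) :
    HasDerivAt u (deriv u r) r :=
  ((hu.contDiffOn.contDiffAt (Ici_mem_nhds hr)).differentiableAt one_ne_zero).hasDerivAt

theorem continuousOn_pow_mul_rpow (hu : IsRegularSolution n k p ρ u) (m : ℕ) (q : ℝ) :
    ContinuousOn (fun t => t ^ m * u t ^ q) (Ici 0) :=
  (continuous_pow m).continuousOn.mul
    (hu.contDiffOn.continuousOn.rpow_const fun t ht => Or.inl (hu.pos t ht).ne')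

theorem intervalIntegrable_pow_mul_rpow (hu : IsRegularSolution n k p ρ u) (m : ℕ) (q : ℝ)
    {r : ℝ} (hr : 0 ≤ r) : IntervalIntegrable (fun t => t ^ m * u t ^ q) volume 0 r :=
  ((hu.continuousOn_pow_mul_rpow m q).mono Icc_subset_Ici_self).intervalIntegrable_of_Icc hr

theorem integral_pow_mul_rpow_pos (hu : IsRegularSolution n k p ρ u) (m : ℕ) (q : ℝ)
    {r : ℝ} (hr : 0 < r) : 0 < ∫ t in (0:ℝ)..r, t ^ m * u t ^ q :=
  intervalIntegral.intervalIntegral_pos_of_pos_on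
    (hu.intervalIntegrable_pow_mul_rpow m q hr.le)
    (fun t ht => mul_pos (pow_pos ht.1 m) (rpow_pos_of_pos (hu.pos t ht.1.le) q)) hr

theorem continuousOn_derivWithin (hu : IsRegularSolution n k p ρ u) :
    ContinuousOn (derivWithin u (Ici 0)) (Ici 0) :=
  hu.contDiffOn.continuousOn_derivWithin (uniqueDiffOn_Ici 0) le_rfl

theorem continuousOn_flux (hu : IsRegularSolution n k p ρ u) (hkn : k < n) :
    ContinuousOn (flux n k u) (Ici 0) := by
  have hv := hu.continuousOn_derivWithin
  refine (((continuous_pow (n - k)).continuousOn.mul (hv.abs.pow (k - 1))).mul hv).congr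
    fun r hr => ?_
  rcases (mem_Ici.mp hr).eq_or_lt with rfl | hr
  · simp [flux_zero hkn, zero_pow (Nat.sub_ne_zero_of_lt hkn)]
  · rw [flux, ← derivWithin_of_mem_nhds (Ici_mem_nhds hr)]
    rfl

theorem flux_eq_neg_integral (hu : IsRegularSolution n k p ρ u) (hkn : k < n) {r : ℝ}
    (hr : 0 ≤ r) :
    flux n k u r = -((k : ℝ) / binomC n k) * ∫ t in (0:ℝ)..r, t ^ (n - 1) * u t ^ p := by
  have hFTC := intervalIntegral.integral_eq_sub_of_hasDerivAt_of_le hr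
    ((hu.continuousOn_flux hkn).mono Icc_subset_Ici_self)
    (fun t ht => (hu.eqn t ht.1).congr_deriv (mul_assoc _ _ _))
    ((hu.intervalIntegrable_pow_mul_rpow (n - 1) p hr).const_mul (-((k : ℝ) / binomC n k)))
  rw [intervalIntegral.integral_const_mul, flux_zero hkn, sub_zero] at hFTC
  exact hFTC.symm

theorem flux_neg (hu : IsRegularSolution n k p ρ u) (hk : 0 < k) (hkn : k < n) {r : ℝ}
    (hr : 0 < r) : flux n k u r < 0 := by
  have hc : 0 < (k : ℝ) / binomC n k := div_pos (by exact_mod_cast hk) (binomC_pos hkn.le)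
  rw [hu.flux_eq_neg_integral hkn hr.le, neg_mul]
  exact neg_neg_of_pos (mul_pos hc (hu.integral_pow_mul_rpow_pos _ _ hr))

theorem deriv_neg (hu : IsRegularSolution n k p ρ u) (hk : 0 < k) (hkn : k < n) {r : ℝ}
    (hr : 0 < r) : deriv u r < 0 := by
  by_contra! h
  exact (hu.flux_neg hk hkn hr).not_ge (mul_nonneg (by positivity) h)

theorem neg_flux_eq (hu : IsRegularSolution n k p ρ u) (hk : 0 < k) (hkn : k < n) {r : ℝ}
    (hr : 0 < r) : -flux n k u r = r ^ (n - k) * |deriv u r| ^ k := by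
  have hpow : |deriv u r| ^ k = |deriv u r| ^ (k - 1) * |deriv u r| := by
    rw [← pow_succ, Nat.sub_add_cancel hk]
  rw [hpow, flux, abs_of_neg (hu.deriv_neg hk hkn hr)]
  ring

theorem antitoneOn (hu : IsRegularSolution n k p ρ u) (hk : 0 < k) (hkn : k < n) :
    AntitoneOn u (Ici 0) := by
  refine antitoneOn_of_deriv_nonpos (convex_Ici 0) hu.contDiffOn.continuousOn ?_ ?_ <;>
    rw [interior_Ici]
  · exact fun r hr => (hu.hasDerivAt hr).differentiableAt.differentiableWithinAt
  · exact fun r hr => (hu.deriv_neg hk hkn hr).le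

theorem rpow_mul_pow_div_le_integral (hu : IsRegularSolution n k p ρ u) (hk : 0 < k)
    (hkn : k < n) (hp : 0 ≤ p) {r : ℝ} (hr : 0 < r) :
    u r ^ p * (r ^ n / n) ≤ ∫ t in (0:ℝ)..r, t ^ (n - 1) * u t ^ p := by
  have hn : ((n - 1 : ℕ) : ℝ) + 1 = n := by norm_cast; omega
  calc u r ^ p * (r ^ n / n) = ∫ t in (0:ℝ)..r, t ^ (n - 1) * u r ^ p := by
        rw [intervalIntegral.integral_mul_const, integral_pow, hn, Nat.sub_add_cancel (by omega),
          zero_pow (by omega)]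
        ring
    _ ≤ ∫ t in (0:ℝ)..r, t ^ (n - 1) * u t ^ p :=
        intervalIntegral.integral_mono_on hr.le
          (((continuous_pow _).mul continuous_const).intervalIntegrable _ _)
          (hu.intervalIntegrable_pow_mul_rpow _ _ hr.le) fun t ht =>
          mul_le_mul_of_nonneg_left (rpow_le_rpow (hu.pos r hr.le).le
            (hu.antitoneOn hk hkn ht.1 hr.le ht.2) hp) (pow_nonneg ht.1 _)

theorem pow_mul_le_abs_deriv_pow (hu : IsRegularSolution n k p ρ u) (hk : 0 < k) (hkn : k < n)
    (hp : 0 ≤ p) {r : ℝ} (hr : 0 < r) :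
    (k : ℝ) / binomC n k / n * u r ^ p * r ^ k ≤ |deriv u r| ^ k := by
  have hc : 0 < (k : ℝ) / binomC n k := div_pos (by exact_mod_cast hk) (binomC_pos hkn.le)
  have hrn : r ^ n = r ^ k * r ^ (n - k) := by rw [← pow_add, Nat.add_sub_cancel' hkn.le]
  refine le_of_mul_le_mul_right ?_ (pow_pos hr (n - k))
  calc (k : ℝ) / binomC n k / n * u r ^ p * r ^ k * r ^ (n - k)
      = (k : ℝ) / binomC n k * (u r ^ p * (r ^ n / n)) := by rw [hrn]; ring
    _ ≤ (k : ℝ) / binomC n k * ∫ t in (0:ℝ)..r, t ^ (n - 1) * u t ^ p :=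
        mul_le_mul_of_nonneg_left (hu.rpow_mul_pow_div_le_integral hk hkn hp hr) hc.le
    _ = |deriv u r| ^ k * r ^ (n - k) := by
        rw [mul_comm (|deriv u r| ^ k), ← hu.neg_flux_eq hk hkn hr,
          hu.flux_eq_neg_integral hkn hr.le]
        ring

theorem deriv_le_neg_mul_rpow (hu : IsRegularSolution n k p ρ u) (hk : 0 < k) (hkn : k < n)
    (hp : 0 ≤ p) {r : ℝ} (hr : 0 < r) :
    deriv u r ≤ -(((k : ℝ) / binomC n k / n) ^ (k⁻¹ : ℝ) * r * u r ^ (p / k)) := by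
  have hcn : 0 < (k : ℝ) / binomC n k / n :=
    div_pos (div_pos (by exact_mod_cast hk) (binomC_pos hkn.le)) (by exact_mod_cast hk.trans hkn)
  have hur := hu.pos r hr.le
  have hle : ((k : ℝ) / binomC n k / n) ^ (k⁻¹ : ℝ) * r * u r ^ (p / k) ≤ |deriv u r| := by
    rw [← pow_le_pow_iff_left₀ (by positivity) (abs_nonneg _) hk.ne']
    calc (((k : ℝ) / binomC n k / n) ^ (k⁻¹ : ℝ) * r * u r ^ (p / k)) ^ k
        = (k : ℝ) / binomC n k / n * u r ^ p * r ^ k := by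
          rw [mul_pow, mul_pow, rpow_inv_natCast_pow hcn.le hk.ne', ← rpow_natCast (u r ^ _),
            ← rpow_mul hur.le, div_mul_cancel₀ _ (by exact_mod_cast hk.ne')]
          ring
      _ ≤ |deriv u r| ^ k := hu.pow_mul_le_abs_deriv_pow hk hkn hp hr
  linarith [abs_of_neg (hu.deriv_neg hk hkn hr)]

theorem le_mul_rpow_neg_decayExp (hu : IsRegularSolution n k p ρ u) (hk : 0 < k) (hkn : k < n)
    (hpk : (k : ℝ) < p) : ∃ C, 0 < C ∧ ∀ r, 0 < r → u r ≤ C * r ^ (-decayExp k p) := by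
  have hk' : (0 : ℝ) < k := by exact_mod_cast hk
  set α := (p - k) / k with hα_def
  set β := ((k : ℝ) / binomC n k / n) ^ (k⁻¹ : ℝ)
  have hα : 0 < α := div_pos (sub_pos.2 hpk) hk'
  have hβ : 0 < β := rpow_pos_of_pos
    (div_pos (div_pos hk' (binomC_pos hkn.le)) (by exact_mod_cast hk.trans hkn)) _
  have hexp : 1 + α = p / k := by rw [hα_def]; field_simp; ring
  have hθ : 2 / α = decayExp k p := by rw [hα_def, decayExp]; field_simp
  refine ⟨(α * β / 2) ^ (-α⁻¹), by positivity, fun r hr => ?_⟩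
  rw [← hθ]
  refine le_mul_rpow_of_deriv_le_neg_mul_rpow hα hβ hu.contDiffOn.continuousOn hu.pos
    (fun r hr => (hu.hasDerivAt hr).differentiableAt) (fun r hr => ?_) hr
  rw [hexp]
  exact hu.deriv_le_neg_mul_rpow hk hkn (by linarith) hr

theorem integrableOn_pow_mul_rpow_add_one (hu : IsRegularSolution n k p ρ u) (hk : 0 < k)
    (hkn : k < n) (hpk : (k : ℝ) < p) (hp : (n : ℝ) < decayExp k p * (p + 1)) :
    IntegrableOn (fun r => r ^ (n - 1) * u r ^ (p + 1)) (Ioi 0) := by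
  obtain ⟨C, hC, hdecay⟩ := hu.le_mul_rpow_neg_decayExp hk hkn hpk
  have hn : ((n - 1 : ℕ) : ℝ) + 1 = n := by norm_cast; omega
  have hp1 : 0 ≤ p + 1 := by linarith [(Nat.cast_nonneg k : (0 : ℝ) ≤ k)]
  refine integrableOn_Ioi_of_isBigO_rpow (hu.continuousOn_pow_mul_rpow _ _)
    (s := (n - 1 : ℕ) - decayExp k p * (p + 1)) (by linarith) (IsBigO.of_bound (C ^ (p + 1)) ?_)
  filter_upwards [eventually_gt_atTop 0] with r hr
  have hur := hu.pos r hr.le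
  rw [norm_of_nonneg (by positivity), norm_of_nonneg (by positivity)]
  exact pow_mul_rpow_le_of_le_mul_rpow _ hr hur.le hC.le hp1 (hdecay r hr)

theorem tendsto_mul_flux_atTop (hu : IsRegularSolution n k p ρ u) (hk : 0 < k) (hkn : k < n)
    (hpk : (k : ℝ) < p) (hp1 : decayExp k p * p < n) (hp2 : (n : ℝ) < decayExp k p * (p + 1)) :
    Tendsto (fun R => u R * flux n k u R) atTop (𝓝 0) := by
  obtain ⟨C, hC, hdecay⟩ := hu.le_mul_rpow_neg_decayExp hk hkn hpk
  set θ := decayExp k p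
  set c := (k : ℝ) / binomC n k
  have hc : 0 < c := div_pos (by exact_mod_cast hk) (binomC_pos hkn.le)
  have hn : ((n - 1 : ℕ) : ℝ) + 1 = n := by norm_cast; omega
  have hp : 0 ≤ p := by linarith [(Nat.cast_nonneg k : (0 : ℝ) ≤ k)]
  set K := c * C ^ (p + 1) / (n - θ * p) with hK_def
  have hbound : ∀ R, 0 < R → -(K * R ^ (-(θ * (p + 1) - n))) ≤ u R * flux n k u R := by
    intro R hR
    have hF := integral_pow_mul_rpow_le_of_le_mul_rpow (n - 1) (fun r hr => (hu.pos r hr.le).le)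
      hC.le hdecay hp (by rwa [hn]) hR.le (hu.intervalIntegrable_pow_mul_rpow _ _ hR.le)
    rw [hn] at hF
    calc -(K * R ^ (-(θ * (p + 1) - n)))
        = -(c * (C * R ^ (-θ) * (C ^ p * (R ^ (n - θ * p) / (n - θ * p))))) := by
          rw [hK_def, show -(θ * (p + 1) - n) = -θ + (n - θ * p) by ring, rpow_add hR,
            rpow_add_one hC.ne']
          ring
      _ ≤ -(c * (u R * ∫ t in (0:ℝ)..R, t ^ (n - 1) * u t ^ p)) :=
          neg_le_neg (mul_le_mul_of_nonneg_left (mul_le_mul (hdecay R hR) hF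
            (hu.integral_pow_mul_rpow_pos _ _ hR).le (by positivity)) hc.le)
      _ = u R * flux n k u R := by rw [hu.flux_eq_neg_integral hkn hR.le]; ring
  have hK : Tendsto (fun R => -(K * R ^ (-(θ * (p + 1) - n)))) atTop (𝓝 0) := by
    simpa using ((tendsto_rpow_neg_atTop (by linarith : 0 < θ * (p + 1) - n)).const_mul K).neg
  refine tendsto_of_tendsto_of_tendsto_of_le_of_le' hK tendsto_const_nhds ?_ ?_ <;>
    filter_upwards [eventually_gt_atTop 0] with R hR
  · exact hbound R hR
  · exact mul_nonpos_of_nonneg_of_nonpos (hu.pos R hR.le).le (hu.flux_neg hk hkn hR).le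

theorem integrableOn_Ioc_energy (hu : IsRegularSolution n k p ρ u) (b : ℝ) :
    IntegrableOn (fun r => r ^ (n - k) * |deriv u r| ^ (k + 1)) (Ioc 0 b) := by
  -- `deriv u 0` is unconstrained, so continuity comes from the one-sided derivative.
  have hcont :
      ContinuousOn (fun r => r ^ (n - k) * |derivWithin u (Ici 0) r| ^ (k + 1)) (Ici 0) :=
    (continuous_pow _).continuousOn.mul (hu.continuousOn_derivWithin.abs.pow _)
  refine (((hcont.mono Icc_subset_Ici_self).integrableOn_compact isCompact_Icc).mono_set
    Ioc_subset_Icc_self).congr_fun (fun r hr => ?_) measurableSet_Ioc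
  simp only [derivWithin_of_mem_nhds (Ici_mem_nhds hr.1)]

theorem integral_energy_eq (hu : IsRegularSolution n k p ρ u) (hk : 0 < k) (hkn : k < n)
    {R : ℝ} (hR : 0 ≤ R) :
    ∫ r in (0:ℝ)..R, r ^ (n - k) * |deriv u r| ^ (k + 1)
      = (k : ℝ) / binomC n k * (∫ r in (0:ℝ)..R, r ^ (n - 1) * u r ^ (p + 1))
        + u R * flux n k u R := by
  have hint1 : IntervalIntegrable (fun r => r ^ (n - k) * |deriv u r| ^ (k + 1)) volume 0 R :=
    (intervalIntegrable_iff_integrableOn_Ioc_of_le hR).mpr (hu.integrableOn_Ioc_energy R)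
  have hint2 := (hu.intervalIntegrable_pow_mul_rpow (n - 1) (p + 1) hR).const_mul
    ((k : ℝ) / binomC n k)
  have hderiv : ∀ r ∈ Ioo 0 R, HasDerivAt (fun r => u r * flux n k u r)
      (r ^ (n - k) * |deriv u r| ^ (k + 1) - k / binomC n k * (r ^ (n - 1) * u r ^ (p + 1))) r :=
    fun r hr => ((hu.hasDerivAt hr.1).mul (hu.eqn r hr.1)).congr_deriv (by
      rw [deriv_mul_flux u r hk, rpow_add_one (hu.pos r hr.1.le).ne']
      ring)
  have hFTC := intervalIntegral.integral_eq_sub_of_hasDerivAt_of_le hR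
    ((hu.contDiffOn.continuousOn.mul (hu.continuousOn_flux hkn)).mono Icc_subset_Ici_self)
    hderiv (hint1.sub hint2)
  rw [intervalIntegral.integral_sub hint1 hint2, intervalIntegral.integral_const_mul,
    Pi.mul_apply, Pi.mul_apply, flux_zero hkn, mul_zero, sub_zero] at hFTC
  linarith


theorem tendsto_intervalIntegral_energy (hu : IsRegularSolution n k p ρ u) (hk : 0 < k)
    (hkn : k < n) (hpk : (k : ℝ) < p) (hp1 : decayExp k p * p < n)
    (hp2 : (n : ℝ) < decayExp k p * (p + 1)) :
    Tendsto (fun R => ∫ r in (0:ℝ)..R, r ^ (n - k) * |deriv u r| ^ (k + 1)) atTop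
      (𝓝 ((k : ℝ) / binomC n k * ∫ r in Ioi (0 : ℝ), r ^ (n - 1) * u r ^ (p + 1))) := by
  have h := ((intervalIntegral_tendsto_integral_Ioi 0
    (hu.integrableOn_pow_mul_rpow_add_one hk hkn hpk hp2) tendsto_id).const_mul
    ((k : ℝ) / binomC n k)).add (hu.tendsto_mul_flux_atTop hk hkn hpk hp1 hp2)
  rw [add_zero] at h
  refine h.congr' ?_
  filter_upwards [eventually_ge_atTop 0] with R hR using (hu.integral_energy_eq hk hkn hR).symm

end IsRegularSolution

theorem energy_identity_general (n k : ℕ) (p ρ : ℝ) (u : ℝ → ℝ)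
    (hk1 : 1 < k) (hk2 : 2 * k < n)
    (hp1 : (n : ℝ) * k / ((n : ℝ) - 2 * k) < p)
    (hp2 : p < ((n : ℝ) + 2) * k / ((n : ℝ) - 2 * k))
    (hu : IsRegularSolution n k p ρ u) :
    IntegrableOn (fun r : ℝ => r ^ (n - k) * |deriv u r| ^ (k + 1)) (Ioi 0) ∧
    IntegrableOn (fun r : ℝ => r ^ (n - 1) * u r ^ (p + 1)) (Ioi 0) ∧
    ∫ r in Ioi (0 : ℝ), r ^ (n - k) * |deriv u r| ^ (k + 1)
      = ((k : ℝ) / binomC n k) * ∫ r in Ioi (0 : ℝ), r ^ (n - 1) * u r ^ (p + 1) := by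
  have hk : 0 < k := by omega
  have hkn : k < n := by omega
  have hk' : (0 : ℝ) < k := by exact_mod_cast hk
  have hk2' : 2 * (k : ℝ) < n := by exact_mod_cast hk2
  have hpk : (k : ℝ) < p := lt_of_mul_div_sub_two_mul_lt hk' hk2' hp1
  have hp2' := lt_decayExp_mul_add_one hk2' hpk hp2
  have hlim := hu.tendsto_intervalIntegral_energy hk hkn hpk (decayExp_mul_lt hk' hk2' hp1) hp2'
  have hg1 := integrableOn_Ioi_of_tendsto_intervalIntegral_of_nonneg hu.integrableOn_Ioc_energy
    (fun r hr => by positivity) hlim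
  exact ⟨hg1, hu.integrableOn_pow_mul_rpow_add_one hk hkn hpk hp2',
    tendsto_nhds_unique (intervalIntegral_tendsto_integral_Ioi 0 hg1 tendsto_id) hlim⟩

/-- the energy identity for regular solutions when `p_se < p < p_so`. -/
theorem energy_identity (n k : ℕ) (p ρ : ℝ) (u : ℝ → ℝ)
    (hn : 3 ≤ n) (hk1 : 1 < k) (hk2 : 2 * k < n) (hρ : 0 < ρ)
    (hp1 : (n : ℝ) * k / ((n : ℝ) - 2 * k) < p)
    (hp2 : p < ((n : ℝ) + 2) * k / ((n : ℝ) - 2 * k))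
    (hu : IsRegularSolution n k p ρ u) :
    IntegrableOn (fun r : ℝ => r ^ (n - k) * |deriv u r| ^ (k + 1)) (Ioi 0) ∧
    IntegrableOn (fun r : ℝ => r ^ (n - 1) * u r ^ (p + 1)) (Ioi 0) ∧
    ∫ r in Ioi (0 : ℝ), r ^ (n - k) * |deriv u r| ^ (k + 1)
      = ((k : ℝ) / binomC n k) * ∫ r in Ioi (0 : ℝ), r ^ (n - 1) * u r ^ (p + 1) :=
  energy_identity_general n k p ρ u hk1 hk2 hp1 hp2 hu

end KHessianPaper
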